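/- Let A be an n×n real matrix such that D(A) belongs to the class 𝒟, D(A) is strongly connected, and Δ_A ≠ 0. Then D(A^#) is a strongly connected simple symmetric digraph; in particular, A^# has zero diagonal and is combinatorially symmetric (its (i,j) entry is nonzero iff its (j,i) entry is nonzero). -/

import Mathlib

/-!
Take for `S` the set of pendant vertices. Strong connectivity makes `S` independent (unless every
vertex is pendant: then `D(A)` is a single 2-cycle and `S` is one of its vertices), and the maximum
matchings are exactly the choices of one pendant neighbour for every non-pendant vertex, so
`Δ_A = ∏_q Σ_q` with `Σ_q = ∑_{p ~ q} a_qp a_pq`. Hence, in block form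
`A = [[0, B], [C, D]]`, `C B = diag Σ` is invertible, which gives `A^#` explicitly. Its `(p, q)`
and `(q, p)` entries are nonzero iff `a_pq` is, its `(q, q')` entries vanish, and its `(p, p')`
entry is nonzero iff the neighbours of `p` and `p'` are adjacent; all claims are read off this
pattern.
-/

open Matrix

/-- Adjacency in a digraph given by relation `G`: a 2-cycle between distinct `i` and `j`. -/
def Adjd {n : ℕ} (G : Fin n → Fin n → Prop) (i j : Fin n) : Prop :=
  i ≠ j ∧ G i j ∧ G j i

/-- `G` is a simple symmetric digraph: no loops and edges come in both directions. -/
def IsSSD {n : ℕ} (G : Fin n → Fin n → Prop) : Prop :=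
  (∀ i, ¬ G i i) ∧ ∀ i j, G i j → G j i

/-- A vertex is pendant if it is incident to exactly one 2-cycle. -/
def Pendant {n : ℕ} (G : Fin n → Fin n → Prop) (i : Fin n) : Prop :=
  ∃! j, Adjd G i j

/-- The class 𝒟: simple symmetric digraphs in which every non-pendant vertex is
adjacent to at least one pendant vertex. -/
def InClassD {n : ℕ} (G : Fin n → Fin n → Prop) : Prop :=
  IsSSD G ∧ ∀ i, ¬ Pendant G i → ∃ j, Adjd G i j ∧ Pendant G j

/-- Strong connectivity: a directed path from every vertex to every other vertex. -/
def StronglyConnected {n : ℕ} (G : Fin n → Fin n → Prop) : Prop :=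
  ∀ i j : Fin n, Relation.ReflTransGen G i j

/-- An unordered pair `e` is a 2-cycle of `G`. -/
def IsEdge {n : ℕ} (G : Fin n → Fin n → Prop) (e : Sym2 (Fin n)) : Prop :=
  ∃ i j, e = s(i, j) ∧ Adjd G i j

/-- A matching: a set of pairwise vertex-disjoint 2-cycles. -/
def IsMatching {n : ℕ} (G : Fin n → Fin n → Prop) (M : Finset (Sym2 (Fin n))) : Prop :=
  (∀ e ∈ M, IsEdge G e) ∧
  ∀ e ∈ M, ∀ f ∈ M, e ≠ f → ∀ v : Fin n, v ∈ e → v ∉ f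

/-- A maximum matching: a matching of maximum cardinality. -/
def IsMaxMatching {n : ℕ} (G : Fin n → Fin n → Prop) (M : Finset (Sym2 (Fin n))) : Prop :=
  IsMatching G M ∧ ∀ M', IsMatching G M' → M'.card ≤ M.card

/-- A cycle chain, recorded by its list of (distinct) vertices `i₁, …, i_{m+1}`. -/
def IsCycleChain {n : ℕ} (G : Fin n → Fin n → Prop) (c : List (Fin n)) : Prop :=
  c.Nodup ∧ 2 ≤ c.length ∧ c.Chain' (Adjd G)

/-- A cycle chain from `i` to `j`. -/
def IsCycleChainBtw {n : ℕ} (G : Fin n → Fin n → Prop) (i j : Fin n) (c : List (Fin n)) : Prop :=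
  IsCycleChain G c ∧ c.head? = some i ∧ c.getLast? = some j

/-- The list of 2-cycles of a cycle chain. -/
def chainEdges {n : ℕ} (c : List (Fin n)) : List (Sym2 (Fin n)) :=
  List.zipWith (fun a b => s(a, b)) c c.tail

/-- The cycle chain `c` is alternating with respect to `M`: its 2-cycles are alternately
in `M` and outside `M`, with the first and last 2-cycle in `M` (so its length is odd). -/
def IsAltChain {n : ℕ} (M : Finset (Sym2 (Fin n))) (c : List (Fin n)) : Prop :=
  Odd (chainEdges c).length ∧
  ∀ k (h : k < (chainEdges c).length), ((chainEdges c).get ⟨k, h⟩ ∈ M ↔ Even k)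

/-- The digraph of a square matrix: edge `(i,j)` iff `A i j ≠ 0`. -/
def DA {n : ℕ} (A : Matrix (Fin n) (Fin n) ℝ) : Fin n → Fin n → Prop :=
  fun i j => A i j ≠ 0

/-- The cycle product `a_{ij} a_{ji}` of a 2-cycle. -/
def cycProd {n : ℕ} (A : Matrix (Fin n) (Fin n) ℝ) (e : Sym2 (Fin n)) : ℝ :=
  Sym2.lift ⟨fun i j => A i j * A j i, fun i j => mul_comm _ _⟩ e

/-- The matching product η(M) of a matching `M`. -/
noncomputable def matchProd {n : ℕ} (A : Matrix (Fin n) (Fin n) ℝ)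
    (M : Finset (Sym2 (Fin n))) : ℝ :=
  ∏ e ∈ M, cycProd A e

/-- The (finite) collection of all maximum matchings of `D(A)`. -/
noncomputable def maxMatchings {n : ℕ} (A : Matrix (Fin n) (Fin n) ℝ) :
    Finset (Finset (Sym2 (Fin n))) :=
  {M | IsMaxMatching (DA A) M}.toFinite.toFinset

/-- Δ_A: the sum of the matching products over all maximum matchings of `D(A)`. -/
noncomputable def Delta {n : ℕ} (A : Matrix (Fin n) (Fin n) ℝ) : ℝ :=
  ∑ M ∈ maxMatchings A, matchProd A M

/-- 𝕄(i,j): maximum matchings with respect to which some cycle chain from `i` to `j`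
is an alternating cycle chain. -/
def MMset {n : ℕ} (A : Matrix (Fin n) (Fin n) ℝ) (i j : Fin n) :
    Set (Finset (Sym2 (Fin n))) :=
  {M | IsMaxMatching (DA A) M ∧ ∃ c, IsCycleChainBtw (DA A) i j c ∧ IsAltChain M c}

/-- `i` and `j` are maximally matchable: 𝕄(i,j) ≠ ∅. -/
def MaxMatchable {n : ℕ} (A : Matrix (Fin n) (Fin n) ℝ) (i j : Fin n) : Prop :=
  (MMset A i j).Nonempty

open scoped Classical in
/-- The (unique) alternating cycle chain from `i` to `j`, when it exists. -/
noncomputable def theChain {n : ℕ} (A : Matrix (Fin n) (Fin n) ℝ) (i j : Fin n) :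
    List (Fin n) :=
  if h : ∃ c, IsCycleChainBtw (DA A) i j c ∧ ∃ M ∈ MMset A i j, IsAltChain M c
  then h.choose else []

/-- The path product along a cycle chain: `a_{i₁ i₂} a_{i₂ i₃} ⋯ a_{i_m i_{m+1}}`. -/
def pathProd {n : ℕ} (A : Matrix (Fin n) (Fin n) ℝ) (c : List (Fin n)) : ℝ :=
  (List.zipWith (fun a b => A a b) c c.tail).prod

open scoped Classical in
/-- β_{ij} = (−1)^{(m−1)/2} P_m(i,j) for maximally matchable `i, j`, and `0` otherwise. -/
noncomputable def beta {n : ℕ} (A : Matrix (Fin n) (Fin n) ℝ) (i j : Fin n) : ℝ :=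
  if MaxMatchable A i j then
    (-1 : ℝ) ^ (((theChain A i j).length - 2) / 2) * pathProd A (theChain A i j)
  else 0

/-- β̄_{i,j}(M): product of the cycle products of the 2-cycles of `M` not contained in
the alternating cycle chain from `i` to `j`. -/
noncomputable def betaBar {n : ℕ} (A : Matrix (Fin n) (Fin n) ℝ) (i j : Fin n)
    (M : Finset (Sym2 (Fin n))) : ℝ :=
  ∏ e ∈ M.filter (fun e => e ∉ chainEdges (theChain A i j)), cycProd A e

/-- μ_{ij} = β_{ij} · Σ_{M ∈ 𝕄(i,j)} β̄_{i,j}(M). -/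
noncomputable def mu {n : ℕ} (A : Matrix (Fin n) (Fin n) ℝ) (i j : Fin n) : ℝ :=
  beta A i j * ∑ M ∈ (MMset A i j).toFinite.toFinset, betaBar A i j M

/-- `X` is a group inverse of `A`. -/
def IsGroupInverse {n : ℕ} (A X : Matrix (Fin n) (Fin n) ℝ) : Prop :=
  A * X * A = A ∧ X * A * X = X ∧ A * X = X * A

/-- A tree digraph: strongly connected and all of its cycles have length 2. -/
def IsTreeDigraph {n : ℕ} (G : Fin n → Fin n → Prop) : Prop :=
  StronglyConnected G ∧
  ∀ (a : Fin n) (l : List (Fin n)), (a :: l).Nodup → List.Chain G a l →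
    G ((a :: l).getLast (List.cons_ne_nil a l)) a → (a :: l).length = 2

/-- A star tree digraph: a tree digraph with a center adjacent to every other vertex,
every other vertex being adjacent only to the center. -/
def IsStarTree {n : ℕ} (G : Fin n → Fin n → Prop) : Prop :=
  IsTreeDigraph G ∧
  ∃ c : Fin n, (∀ j, j ≠ c → Adjd G c j) ∧ ∀ i j, Adjd G i j → i = c ∨ j = c

/-- A corona digraph: a simple symmetric digraph in which each non-pendant vertex is
adjacent to exactly one pendant vertex. -/
def IsCorona {n : ℕ} (G : Fin n → Fin n → Prop) : Prop :=
  IsSSD G ∧ ∀ i, ¬ Pendant G i → ∃! j, Adjd G i j ∧ Pendant G j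

/-- 𝕄(i): the maximum matchings in which vertex `i` is matched. -/
noncomputable def MMi {n : ℕ} (A : Matrix (Fin n) (Fin n) ℝ) (i : Fin n) :
    Finset (Finset (Sym2 (Fin n))) :=
  {M | IsMaxMatching (DA A) M ∧ ∃ e ∈ M, i ∈ e}.toFinite.toFinset

theorem groupInverse_unique {M : Type*} [Semigroup M] {a x y : M}
    (hx : a * x * a = a ∧ x * a * x = x ∧ a * x = x * a)
    (hy : a * y * a = a ∧ y * a * y = y ∧ a * y = y * a) : x = y := by
  obtain ⟨hxa, hxax, hxc⟩ := hx
  obtain ⟨hya, hyay, hyc⟩ := hy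
  have hax : a * x = a * y :=
    calc a * x = a * y * (a * x) := by rw [← mul_assoc, hya]
      _ = y * a * (x * a) := by rw [hyc, hxc]
      _ = y * (a * x * a) := by simp only [mul_assoc]
      _ = a * y := by rw [hxa, hyc]
  calc x = x * (a * x) := by rw [← mul_assoc, hxax]
    _ = a * y * y := by rw [hax, ← mul_assoc, ← hxc, hax]
    _ = y := by rw [hyc, hyay]

theorem groupInverse_of_corner {R : Type*} [Ring R] {a e t x : R}
    (he : e * e = e) (hae : e * a * e = 0) (hte : t * e = 0) (het : e * t = 0)
    (hl : t * (a * e * a) = 1 - e) (hr : a * e * a * t = 1 - e)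
    (hx : x = t * a * e + e * a * t - e * a * t * a * t * a * e) :
    a * x * a = a ∧ x * a * x = x ∧ a * x = x * a := by
  have hax : a * x = 1 - e + e * a * t * a * e :=
    calc a * x = a * t * a * e + a * e * a * t - a * e * a * t * (a * t * a * e) := by
          rw [hx]; noncomm_ring
      _ = 1 - e + e * a * t * a * e := by rw [hr]; noncomm_ring
  have hxa : x * a = 1 - e + e * a * t * a * e :=
    calc x * a = t * (a * e * a) + e * a * t * a - e * a * t * a * (t * (a * e * a)) := by
          rw [hx]; noncomm_ring
      _ = 1 - e + e * a * t * a * e := by rw [hl]; noncomm_ring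
  have hex : e * x = e * a * t - e * a * t * a * t * a * e :=
    calc e * x = e * t * a * e + e * e * a * t - e * e * a * t * a * t * a * e := by
          rw [hx]; noncomm_ring
      _ = e * a * t - e * a * t * a * t * a * e := by rw [het, he]; noncomm_ring
  refine ⟨?_, ?_, hax.trans hxa.symm⟩
  · calc a * x * a = a - e * a + e * a * (t * (a * e * a)) := by rw [hax]; noncomm_ring
      _ = a - e * a * e := by rw [hl]; noncomm_ring
      _ = a := by rw [hae, sub_zero]
  · calc x * a * x = x - e * x + e * a * t * a * (e * x) := by rw [hxa]; noncomm_ring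
      _ = x - e * x + e * a * t * (a * e * a * t) * (1 - a * t * a * e) := by
          rw [hex]; noncomm_ring
      _ = x - e * x + e * a * t - e * a * t * a * t * a * e -
            e * a * (t * e) * (1 - a * t * a * e) := by
          rw [hr]; noncomm_ring
      _ = x := by rw [hte, hex]; noncomm_ring

section Digraph

variable {n : ℕ} {G : Fin n → Fin n → Prop}

theorem Adjd.symm {i j : Fin n} (h : Adjd G i j) : Adjd G j i :=
  ⟨h.1.symm, h.2.2, h.2.1⟩

theorem IsSSD.adjd {i j : Fin n} (hG : IsSSD G) (h : G i j) : Adjd G i j :=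
  ⟨fun hij => hG.1 i (hij ▸ h), h, hG.2 i j h⟩

theorem eq_or_eq_of_reflTransGen_pendant_pair (hG : IsSSD G) {p p' x : Fin n}
    (hp : Pendant G p) (hp' : Pendant G p') (hpp' : Adjd G p p')
    (hx : Relation.ReflTransGen G p x) : x = p ∨ x = p' := by
  induction hx with
  | refl => exact Or.inl rfl
  | tail _ hyz ih =>
    rcases ih with rfl | rfl
    · exact Or.inr (hp.unique (hG.adjd hyz) hpp')
    · exact Or.inl (hp'.unique (hG.adjd hyz) hpp'.symm)

theorem not_adjd_of_pendant (hG : IsSSD G) (hSC : StronglyConnected G) {q p p' : Fin n}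
    (hq : ¬ Pendant G q) (hp : Pendant G p) (hp' : Pendant G p') : ¬ Adjd G p p' := by
  intro hpp'
  rcases eq_or_eq_of_reflTransGen_pendant_pair hG hp hp' hpp' (hSC p q) with rfl | rfl
  exacts [hq hp, hq hp']

end Digraph

section Pendant

variable {n : ℕ} {A : Matrix (Fin n) (Fin n) ℝ}

theorem adjd_iff_ne_zero (hA : IsSSD (DA A)) {i j : Fin n} : Adjd (DA A) i j ↔ A i j ≠ 0 :=
  ⟨fun h => h.2.1, hA.adjd⟩

theorem IsSSD.ne_zero_comm (hA : IsSSD (DA A)) {i j : Fin n} : A i j ≠ 0 ↔ A j i ≠ 0 :=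
  ⟨hA.2 i j, hA.2 j i⟩

theorem Pendant.apply_eq_zero (hA : IsSSD (DA A)) {p q k : Fin n} (hp : Pendant (DA A) p)
    (hpq : Adjd (DA A) p q) (hk : k ≠ q) : A p k = 0 := by
  by_contra h
  exact hk (hp.unique ((adjd_iff_ne_zero hA).2 h) hpq)

theorem Pendant.apply_eq_zero' (hA : IsSSD (DA A)) {p q k : Fin n} (hp : Pendant (DA A) p)
    (hpq : Adjd (DA A) p q) (hk : k ≠ q) : A k p = 0 := by
  by_contra h
  exact hA.2 k p h (hp.apply_eq_zero hA hpq hk)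

theorem Pendant.mul_apply (hA : IsSSD (DA A)) {p q : Fin n} (hp : Pendant (DA A) p)
    (hpq : Adjd (DA A) p q) (M : Matrix (Fin n) (Fin n) ℝ) (j : Fin n) :
    (A * M) p j = A p q * M q j := by
  rw [Matrix.mul_apply, Finset.sum_eq_single q (fun k _ hk => by
    rw [hp.apply_eq_zero hA hpq hk, zero_mul]) (by simp)]

theorem Pendant.apply_mul (hA : IsSSD (DA A)) {p q : Fin n} (hp : Pendant (DA A) p)
    (hpq : Adjd (DA A) p q) (M : Matrix (Fin n) (Fin n) ℝ) (i : Fin n) :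
    (M * A) i p = M i q * A q p := by
  rw [Matrix.mul_apply, Finset.sum_eq_single q (fun k _ hk => by
    rw [hp.apply_eq_zero' hA hpq hk, mul_zero]) (by simp)]

end Pendant

section PendantSet

variable {n : ℕ} (A : Matrix (Fin n) (Fin n) ℝ) (S : Finset (Fin n))

def projOn : Matrix (Fin n) (Fin n) ℝ :=
  diagonal fun i => if i ∈ S then 1 else 0

def pendantWeight (i : Fin n) : ℝ :=
  ∑ k ∈ S, A i k * A k i

structure IsNondegPendantSet : Prop where
  pendant : ∀ p ∈ S, Pendant (DA A) p
  apply_eq_zero : ∀ p ∈ S, ∀ p' ∈ S, A p p' = 0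
  pendantWeight_ne_zero : ∀ i ∉ S, pendantWeight A S i ≠ 0

noncomputable def weightInv : Matrix (Fin n) (Fin n) ℝ :=
  diagonal fun i => (pendantWeight A S i)⁻¹

/-- In block form with `S` first, `A = [[0, B], [C, D]]` and `C B = Σ` is diagonal; this is
`[[-B Σ⁻¹ D Σ⁻¹ C, B Σ⁻¹], [Σ⁻¹ C, 0]]`. -/
noncomputable def pendantGroupInverse : Matrix (Fin n) (Fin n) ℝ :=
  weightInv A S * A * projOn S + projOn S * A * weightInv A S -
    projOn S * A * weightInv A S * A * weightInv A S * A * projOn S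

variable {A S}

theorem IsNondegPendantSet.pendantWeight_eq_zero (hS : IsNondegPendantSet A S) {p : Fin n}
    (hp : p ∈ S) : pendantWeight A S p = 0 :=
  Finset.sum_eq_zero fun k hk => by rw [hS.apply_eq_zero p hp k hk, zero_mul]

theorem IsNondegPendantSet.not_mem_of_adjd (hS : IsNondegPendantSet A S) {p q : Fin n}
    (hp : p ∈ S) (hpq : Adjd (DA A) p q) : q ∉ S :=
  fun hq => hpq.2.1 (hS.apply_eq_zero p hp q hq)

theorem IsNondegPendantSet.exists_adjd (hS : IsNondegPendantSet A S) {i : Fin n} (hi : i ∉ S) :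
    ∃ p ∈ S, Adjd (DA A) p i := by
  obtain ⟨p, hp, hne⟩ := Finset.exists_ne_zero_of_sum_ne_zero (hS.pendantWeight_ne_zero i hi)
  refine ⟨p, hp, fun hpi => hi (hpi ▸ hp), right_ne_zero_of_mul hne, left_ne_zero_of_mul hne⟩

theorem IsNondegPendantSet.mul_projOn_mul (hA : IsSSD (DA A)) (hS : IsNondegPendantSet A S) :
    A * projOn S * A = diagonal (pendantWeight A S) := by
  ext i j
  rw [Matrix.mul_apply]
  simp only [projOn, mul_diagonal, mul_ite, mul_one, mul_zero, ite_mul, zero_mul,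
    Finset.sum_ite_mem, Finset.univ_inter]
  rcases eq_or_ne i j with rfl | hij
  · simp [pendantWeight]
  · rw [diagonal_apply_ne _ hij]
    refine Finset.sum_eq_zero fun k hk => ?_
    by_contra h
    have hki : Adjd (DA A) k i := hA.adjd (hA.2 i k (left_ne_zero_of_mul h))
    have hkj : Adjd (DA A) k j := hA.adjd (right_ne_zero_of_mul h)
    exact hij ((hS.pendant k hk).unique hki hkj)

theorem IsNondegPendantSet.isGroupInverse (hA : IsSSD (DA A)) (hS : IsNondegPendantSet A S) :
    IsGroupInverse A (pendantGroupInverse A S) := by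
  -- `weightInv` vanishes on `S` because `pendantWeight` does and `0⁻¹ = 0`
  have hw : ∀ i, (pendantWeight A S i)⁻¹ * (if i ∈ S then 1 else 0) = 0 := fun i => by
    split_ifs with hi
    · rw [hS.pendantWeight_eq_zero hi, _root_.inv_zero, zero_mul]
    · rw [mul_zero]
  have hinv : ∀ i, (pendantWeight A S i)⁻¹ * pendantWeight A S i = if i ∈ S then 0 else 1 :=
    fun i => by
      split_ifs with hi
      · rw [hS.pendantWeight_eq_zero hi, mul_zero]
      · exact inv_mul_cancel₀ (hS.pendantWeight_ne_zero i hi)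
  have h1e :
      (1 : Matrix (Fin n) (Fin n) ℝ) - projOn S = diagonal fun i => if i ∈ S then 0 else 1 := by
    ext i j
    rcases eq_or_ne i j with rfl | hij
    · by_cases hi : i ∈ S <;> simp [projOn, hi]
    · simp [projOn, hij]
  refine groupInverse_of_corner (t := diagonal fun i => (pendantWeight A S i)⁻¹)
    ?_ ?_ ?_ ?_ ?_ ?_ rfl
  · simp only [projOn, diagonal_mul_diagonal]
    congr 1; ext i; split_ifs <;> simp
  · ext i j
    by_cases hi : i ∈ S
    · by_cases hj : j ∈ S
      · simp [projOn, hi, hj, hS.apply_eq_zero i hi j hj]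
      · simp [projOn, hj]
    · simp [projOn, hi]
  · simp_rw [projOn, diagonal_mul_diagonal, hw, diagonal_zero]
  · rw [projOn, diagonal_mul_diagonal]
    simp_rw [mul_comm (ite _ _ _), hw, diagonal_zero]
  · rw [hS.mul_projOn_mul hA, diagonal_mul_diagonal, h1e]
    simp_rw [hinv]
  · rw [hS.mul_projOn_mul hA, diagonal_mul_diagonal, h1e]
    simp_rw [mul_comm (pendantWeight A S _), hinv]

theorem pendantGroupInverse_apply (i j : Fin n) :
    pendantGroupInverse A S i j =
      (pendantWeight A S i)⁻¹ * A i j * (if j ∈ S then 1 else 0) +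
        (if i ∈ S then 1 else 0) * A i j * (pendantWeight A S j)⁻¹ -
        (if i ∈ S then 1 else 0) * (A * weightInv A S * A * weightInv A S * A) i j *
          (if j ∈ S then 1 else 0) := by
  have h : projOn S * A * weightInv A S * A * weightInv A S * A * projOn S =
      projOn S * (A * weightInv A S * A * weightInv A S * A) * projOn S := by
    simp only [Matrix.mul_assoc]
  rw [pendantGroupInverse, h]
  simp only [projOn, weightInv, Matrix.sub_apply, Matrix.add_apply, mul_diagonal, diagonal_mul]

theorem pendantGroupInverse_apply_of_not_mem_of_not_mem {i j : Fin n} (hi : i ∉ S)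
    (hj : j ∉ S) : pendantGroupInverse A S i j = 0 := by
  simp [pendantGroupInverse_apply, hi, hj]

theorem pendantGroupInverse_apply_of_mem_of_not_mem {i j : Fin n} (hi : i ∈ S) (hj : j ∉ S) :
    pendantGroupInverse A S i j = A i j * (pendantWeight A S j)⁻¹ := by
  simp [pendantGroupInverse_apply, hi, hj]

theorem pendantGroupInverse_apply_of_not_mem_of_mem {i j : Fin n} (hi : i ∉ S) (hj : j ∈ S) :
    pendantGroupInverse A S i j = (pendantWeight A S i)⁻¹ * A i j := by
  simp [pendantGroupInverse_apply, hi, hj]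

theorem pendantGroupInverse_apply_of_mem_of_mem (hA : IsSSD (DA A)) (hS : IsNondegPendantSet A S)
    {p p' q q' : Fin n} (hp : p ∈ S) (hp' : p' ∈ S) (hpq : Adjd (DA A) p q)
    (hpq' : Adjd (DA A) p' q') :
    pendantGroupInverse A S p p' = -(A p q * (pendantWeight A S q)⁻¹ * A q q' *
      (pendantWeight A S q')⁻¹ * A q' p') := by
  have hAtAt : (A * weightInv A S * A * weightInv A S) p q' =
      A p q * ((pendantWeight A S q)⁻¹ * A q q') * (pendantWeight A S q')⁻¹ := by
    rw [weightInv, mul_diagonal, Matrix.mul_assoc, (hS.pendant p hp).mul_apply hA hpq,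
      diagonal_mul]
  rw [pendantGroupInverse_apply, (hS.pendant p' hp').apply_mul hA hpq', hAtAt,
    hS.pendantWeight_eq_zero hp, hS.apply_eq_zero p hp p' hp', if_pos hp, if_pos hp']
  ring

theorem pendantGroupInverse_ne_zero_iff_of_mem_of_not_mem (hS : IsNondegPendantSet A S)
    {i j : Fin n} (hi : i ∈ S) (hj : j ∉ S) :
    pendantGroupInverse A S i j ≠ 0 ↔ A i j ≠ 0 := by
  rw [pendantGroupInverse_apply_of_mem_of_not_mem hi hj, mul_ne_zero_iff,
    and_iff_left (inv_ne_zero (hS.pendantWeight_ne_zero j hj))]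

theorem pendantGroupInverse_ne_zero_iff_of_not_mem_of_mem (hS : IsNondegPendantSet A S)
    {i j : Fin n} (hi : i ∉ S) (hj : j ∈ S) :
    pendantGroupInverse A S i j ≠ 0 ↔ A i j ≠ 0 := by
  rw [pendantGroupInverse_apply_of_not_mem_of_mem hi hj, mul_ne_zero_iff,
    and_iff_right (inv_ne_zero (hS.pendantWeight_ne_zero i hi))]

theorem pendantGroupInverse_ne_zero_iff_of_mem_of_mem (hA : IsSSD (DA A))
    (hS : IsNondegPendantSet A S) {p p' q q' : Fin n} (hp : p ∈ S) (hp' : p' ∈ S)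
    (hpq : Adjd (DA A) p q) (hpq' : Adjd (DA A) p' q') :
    pendantGroupInverse A S p p' ≠ 0 ↔ A q q' ≠ 0 := by
  have hq := inv_ne_zero (hS.pendantWeight_ne_zero q (hS.not_mem_of_adjd hp hpq))
  have hq' := inv_ne_zero (hS.pendantWeight_ne_zero q' (hS.not_mem_of_adjd hp' hpq'))
  have hpq₁ : A p q ≠ 0 := hpq.2.1
  have hpq'₂ : A q' p' ≠ 0 := hpq'.2.2
  rw [pendantGroupInverse_apply_of_mem_of_mem hA hS hp hp' hpq hpq', neg_ne_zero]
  simp only [mul_ne_zero_iff, hpq₁, hpq'₂, hq, hq', ne_eq, not_false_eq_true, and_true,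
    true_and]

theorem pendantGroupInverse_apply_self (hA : IsSSD (DA A)) (hS : IsNondegPendantSet A S)
    (i : Fin n) : pendantGroupInverse A S i i = 0 := by
  by_cases hi : i ∈ S
  · obtain ⟨q, hiq, -⟩ := hS.pendant i hi
    by_contra h
    exact hA.1 q ((pendantGroupInverse_ne_zero_iff_of_mem_of_mem hA hS hi hi hiq hiq).1 h)
  · exact pendantGroupInverse_apply_of_not_mem_of_not_mem hi hi

theorem pendantGroupInverse_ne_zero_comm (hA : IsSSD (DA A)) (hS : IsNondegPendantSet A S)
    (i j : Fin n) : pendantGroupInverse A S i j ≠ 0 ↔ pendantGroupInverse A S j i ≠ 0 := by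
  by_cases hi : i ∈ S <;> by_cases hj : j ∈ S
  · obtain ⟨q, hiq, -⟩ := hS.pendant i hi
    obtain ⟨q', hjq', -⟩ := hS.pendant j hj
    rw [pendantGroupInverse_ne_zero_iff_of_mem_of_mem hA hS hi hj hiq hjq',
      pendantGroupInverse_ne_zero_iff_of_mem_of_mem hA hS hj hi hjq' hiq, hA.ne_zero_comm]
  · rw [pendantGroupInverse_ne_zero_iff_of_mem_of_not_mem hS hi hj,
      pendantGroupInverse_ne_zero_iff_of_not_mem_of_mem hS hj hi, hA.ne_zero_comm]
  · rw [pendantGroupInverse_ne_zero_iff_of_not_mem_of_mem hS hi hj,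
      pendantGroupInverse_ne_zero_iff_of_mem_of_not_mem hS hj hi, hA.ne_zero_comm]
  · rw [pendantGroupInverse_apply_of_not_mem_of_not_mem hi hj,
      pendantGroupInverse_apply_of_not_mem_of_not_mem hj hi]

/-- An edge between two vertices outside `S` is replaced by a path through pendant neighbours. -/
theorem reflTransGen_pendantGroupInverse (hA : IsSSD (DA A)) (hS : IsNondegPendantSet A S)
    {i j : Fin n} (hij : A i j ≠ 0) :
    Relation.ReflTransGen (DA (pendantGroupInverse A S)) i j := by
  by_cases hi : i ∈ S <;> by_cases hj : j ∈ S
  · exact absurd (hS.apply_eq_zero i hi j hj) hij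
  · exact .single ((pendantGroupInverse_ne_zero_iff_of_mem_of_not_mem hS hi hj).2 hij)
  · exact .single ((pendantGroupInverse_ne_zero_iff_of_not_mem_of_mem hS hi hj).2 hij)
  · obtain ⟨p, hp, hpi⟩ := hS.exists_adjd hi
    obtain ⟨p', hp', hp'j⟩ := hS.exists_adjd hj
    have hXip : DA (pendantGroupInverse A S) i p :=
      (pendantGroupInverse_ne_zero_iff_of_not_mem_of_mem hS hi hp).2 hpi.2.2
    have hXpp' : DA (pendantGroupInverse A S) p p' :=
      (pendantGroupInverse_ne_zero_iff_of_mem_of_mem hA hS hp hp' hpi hp'j).2 hij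
    have hXp'j : DA (pendantGroupInverse A S) p' j :=
      (pendantGroupInverse_ne_zero_iff_of_mem_of_not_mem hS hp' hj).2 hp'j.2.1
    exact ((Relation.ReflTransGen.single hXip).tail hXpp').tail hXp'j

theorem IsNondegPendantSet.groupInverse_digraph (hA : IsSSD (DA A))
    (hSC : StronglyConnected (DA A)) (hS : IsNondegPendantSet A S) (X : Matrix (Fin n) (Fin n) ℝ)
    (hX : IsGroupInverse A X) :
    StronglyConnected (DA X) ∧ IsSSD (DA X) ∧ (∀ i, X i i = 0) ∧
      ∀ i j, X i j ≠ 0 ↔ X j i ≠ 0 := by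
  obtain rfl := groupInverse_unique hX (hS.isGroupInverse hA)
  have hdiag := pendantGroupInverse_apply_self hA hS
  have hcomm := pendantGroupInverse_ne_zero_comm hA hS
  refine ⟨fun i j => Relation.reflTransGen_closed (fun _ _ h => ?_) _ _ (hSC i j),
    ⟨fun i h => h (hdiag i), fun i j => (hcomm i j).1⟩, hdiag, hcomm⟩
  exact reflTransGen_pendantGroupInverse hA hS h

end PendantSet

section Matching

open scoped Classical

variable {n : ℕ} {G : Fin n → Fin n → Prop}

variable (G) in
noncomputable def pendantSet : Finset (Fin n) :=
  Finset.univ.filter (Pendant G)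

variable (G) in
noncomputable def innerSet : Finset (Fin n) :=
  Finset.univ.filter fun q => ¬ Pendant G q

variable (G) in
noncomputable def pendantNbrs (q : Fin n) : Finset (Fin n) :=
  (pendantSet G).filter (Adjd G q)

variable (G) in
noncomputable def starMatching (x : ∀ q ∈ innerSet G, Fin n) : Finset (Sym2 (Fin n)) :=
  (innerSet G).attach.image fun q => s(q.1, x q.1 q.2)

theorem mem_pendantSet {p : Fin n} : p ∈ pendantSet G ↔ Pendant G p := by
  simp [pendantSet]

theorem mem_innerSet {q : Fin n} : q ∈ innerSet G ↔ ¬ Pendant G q := by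
  simp [innerSet]

theorem mem_pendantNbrs {q p : Fin n} : p ∈ pendantNbrs G q ↔ Pendant G p ∧ Adjd G q p := by
  simp [pendantNbrs, pendantSet]

theorem IsEdge.exists_adjd_of_mem {e : Sym2 (Fin n)} {v : Fin n} (he : IsEdge G e)
    (hv : v ∈ e) : ∃ w, Adjd G v w ∧ e = s(v, w) := by
  obtain ⟨i, j, rfl, hij⟩ := he
  rcases Sym2.mem_iff.1 hv with rfl | rfl
  exacts [⟨j, hij, rfl⟩, ⟨i, hij.symm, Sym2.eq_swap⟩]

theorem IsEdge.exists_mem_innerSet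
    (hPP : ∀ p p', Pendant G p → Pendant G p' → ¬ Adjd G p p') {e : Sym2 (Fin n)}
    (he : IsEdge G e) : ∃ q ∈ innerSet G, q ∈ e := by
  obtain ⟨i, j, rfl, hij⟩ := he
  by_cases hi : Pendant G i
  · exact ⟨j, mem_innerSet.2 fun hj => hPP i j hi hj hij, Sym2.mem_mk_right i j⟩
  · exact ⟨i, mem_innerSet.2 hi, Sym2.mem_mk_left i j⟩

theorem IsMatching.card_le_of_forall_exists_mem {M : Finset (Sym2 (Fin n))}
    (hM : IsMatching G M) {T : Finset (Fin n)} (h : ∀ e ∈ M, ∃ v ∈ T, v ∈ e) :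
    M.card ≤ T.card :=
  Finset.card_le_card_of_forall_subsingleton (fun e v => v ∈ e) h fun v _ e₁ he₁ e₂ he₂ =>
    by_contra fun hne => hM.2 e₁ he₁.1 e₂ he₂.1 hne v he₁.2 he₂.2

theorem IsMatching.card_le_card_innerSet
    (hPP : ∀ p p', Pendant G p → Pendant G p' → ¬ Adjd G p p') {M : Finset (Sym2 (Fin n))}
    (hM : IsMatching G M) : M.card ≤ (innerSet G).card :=
  hM.card_le_of_forall_exists_mem fun e he => (hM.1 e he).exists_mem_innerSet hPP

theorem eq_and_eq_of_mk_eq_mk_of_pendant {q q' p p' : Fin n} (hq' : ¬ Pendant G q') (hp : Pendant G p)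
    (h : s(q, p) = s(q', p')) : q = q' ∧ p = p' := by
  rcases Sym2.eq_iff.1 h with h | ⟨-, rfl⟩
  exacts [h, absurd hp hq']

section StarMatching

variable {x : ∀ q ∈ innerSet G, Fin n} (hx : x ∈ (innerSet G).pi (pendantNbrs G))
include hx

theorem pendant_and_adjd_of_mem_pi {q : Fin n} (hq : q ∈ innerSet G) :
    Pendant G (x q hq) ∧ Adjd G q (x q hq) :=
  mem_pendantNbrs.1 (Finset.mem_pi.1 hx q hq)

theorem injOn_starEdge :
    Set.InjOn (fun q : {q // q ∈ innerSet G} => s(q.1, x q.1 q.2)) (innerSet G).attach := by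
  intro q _ q' _ h
  exact Subtype.ext (eq_and_eq_of_mk_eq_mk_of_pendant (mem_innerSet.1 q'.2)
    (pendant_and_adjd_of_mem_pi hx q.2).1 h).1

theorem card_starMatching : (starMatching G x).card = (innerSet G).card := by
  rw [starMatching, Finset.card_image_of_injOn (injOn_starEdge hx), Finset.card_attach]

theorem isMatching_starMatching : IsMatching G (starMatching G x) := by
  simp only [IsMatching, starMatching, Finset.forall_mem_image, Finset.mem_attach,
    forall_const, Subtype.forall]
  refine ⟨fun q hq => ⟨q, x q hq, rfl, (pendant_and_adjd_of_mem_pi hx hq).2⟩,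
    fun q hq q' hq' hne v hv hv' => hne ?_⟩
  obtain ⟨hp, hqp⟩ := pendant_and_adjd_of_mem_pi hx hq
  obtain ⟨hp', hqp'⟩ := pendant_and_adjd_of_mem_pi hx hq'
  rw [Sym2.mem_iff] at hv hv'
  obtain rfl : q = q' := by
    rcases hv with rfl | rfl <;> rcases hv' with h | h
    · exact h
    · exact absurd (h ▸ hp') (mem_innerSet.1 hq)
    · exact absurd (h ▸ hp) (mem_innerSet.1 hq')
    · exact hp.unique hqp.symm (h ▸ hqp'.symm)
  rfl

theorem isMaxMatching_starMatching
    (hPP : ∀ p p', Pendant G p → Pendant G p' → ¬ Adjd G p p') :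
    IsMaxMatching G (starMatching G x) :=
  ⟨isMatching_starMatching hx, fun _ hM' =>
    (hM'.card_le_card_innerSet hPP).trans_eq (card_starMatching hx).symm⟩

end StarMatching

theorem injOn_starMatching :
    Set.InjOn (starMatching G) ((innerSet G).pi (pendantNbrs G)) := by
  intro x hx y hy hxy
  funext q hq
  have hmem : s(q, x q hq) ∈ starMatching G y := hxy ▸ Finset.mem_image_of_mem _
    (Finset.mem_attach _ ⟨q, hq⟩)
  obtain ⟨⟨q', hq'⟩, -, h⟩ := Finset.mem_image.1 hmem
  obtain ⟨rfl, h⟩ := eq_and_eq_of_mk_eq_mk_of_pendant (mem_innerSet.1 hq)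
    (pendant_and_adjd_of_mem_pi hy hq').1 h
  exact h.symm

theorem exists_mem_pi_pendantNbrs
    (hD : ∀ q, ¬ Pendant G q → ∃ p, Adjd G q p ∧ Pendant G p) :
    ∃ x, x ∈ (innerSet G).pi (pendantNbrs G) :=
  Finset.pi_nonempty.2 fun q hq =>
    let ⟨p, hqp, hp⟩ := hD q (mem_innerSet.1 hq)
    ⟨p, mem_pendantNbrs.2 ⟨hp, hqp⟩⟩

theorem IsMaxMatching.card_eq
    (hPP : ∀ p p', Pendant G p → Pendant G p' → ¬ Adjd G p p')
    (hD : ∀ q, ¬ Pendant G q → ∃ p, Adjd G q p ∧ Pendant G p)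
    {M : Finset (Sym2 (Fin n))} (hM : IsMaxMatching G M) : M.card = (innerSet G).card := by
  obtain ⟨x, hx⟩ := exists_mem_pi_pendantNbrs hD
  exact (hM.1.card_le_card_innerSet hPP).antisymm
    ((card_starMatching hx).symm.trans_le (hM.2 _ (isMatching_starMatching hx)))

/-- If `q` were unmatched, or matched to a non-pendant `y`, every edge of `M` would meet
`innerSet G` outside `q`, resp. `y`, and `M` would be too small. -/
theorem IsMaxMatching.exists_pendant_partner
    (hPP : ∀ p p', Pendant G p → Pendant G p' → ¬ Adjd G p p')
    (hD : ∀ q, ¬ Pendant G q → ∃ p, Adjd G q p ∧ Pendant G p)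
    {M : Finset (Sym2 (Fin n))} (hM : IsMaxMatching G M) {q : Fin n} (hq : q ∈ innerSet G) :
    ∃ p ∈ pendantNbrs G q, s(q, p) ∈ M := by
  have hsmall :
      ∀ y ∈ innerSet G, (∀ e ∈ M, ∃ v ∈ innerSet G, v ≠ y ∧ v ∈ e) → False :=
    fun y hy h => by
      have := hM.1.card_le_of_forall_exists_mem (T := (innerSet G).erase y) fun e he =>
        let ⟨v, hv, hvy, hve⟩ := h e he
        ⟨v, Finset.mem_erase.2 ⟨hvy, hv⟩, hve⟩
      rw [Finset.card_erase_of_mem hy, hM.card_eq hPP hD] at this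
      exact absurd this (Nat.sub_lt (Finset.card_pos.2 ⟨y, hy⟩) one_pos).not_ge
  by_cases hcov : ∃ e ∈ M, q ∈ e
  · obtain ⟨e, he, hqe⟩ := hcov
    obtain ⟨y, hqy, rfl⟩ := (hM.1.1 e he).exists_adjd_of_mem hqe
    by_cases hy : Pendant G y
    · exact ⟨y, mem_pendantNbrs.2 ⟨hy, hqy⟩, he⟩
    refine (hsmall y (mem_innerSet.2 hy) fun e' he' => ?_).elim
    by_cases hee' : s(q, y) = e'
    · exact ⟨q, hq, hqy.1, hee' ▸ Sym2.mem_mk_left q y⟩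
    · obtain ⟨v, hv, hve'⟩ := (hM.1.1 e' he').exists_mem_innerSet hPP
      exact ⟨v, hv, fun hvy => hM.1.2 _ he _ he' hee' y (Sym2.mem_mk_right q y) (hvy ▸ hve'),
        hve'⟩
  · refine (hsmall q hq fun e he => ?_).elim
    obtain ⟨v, hv, hve⟩ := (hM.1.1 e he).exists_mem_innerSet hPP
    exact ⟨v, hv, fun hvq => hcov ⟨e, he, hvq ▸ hve⟩, hve⟩

theorem IsMaxMatching.exists_eq_starMatching
    (hPP : ∀ p p', Pendant G p → Pendant G p' → ¬ Adjd G p p')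
    (hD : ∀ q, ¬ Pendant G q → ∃ p, Adjd G q p ∧ Pendant G p)
    {M : Finset (Sym2 (Fin n))} (hM : IsMaxMatching G M) :
    ∃ x ∈ (innerSet G).pi (pendantNbrs G), starMatching G x = M := by
  choose x hx hxM using fun q (hq : q ∈ innerSet G) => hM.exists_pendant_partner hPP hD hq
  have hxpi : x ∈ (innerSet G).pi (pendantNbrs G) := Finset.mem_pi.2 hx
  refine ⟨x, hxpi, Finset.eq_of_subset_of_card_le ?_ ?_⟩
  · simp only [starMatching, Finset.image_subset_iff, Finset.mem_attach, forall_const,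
      Subtype.forall]
    exact hxM
  · rw [card_starMatching hxpi, hM.card_eq hPP hD]

theorem delta_eq_prod {A : Matrix (Fin n) (Fin n) ℝ}
    (hPP : ∀ p p', Pendant (DA A) p → Pendant (DA A) p' → ¬ Adjd (DA A) p p')
    (hD : ∀ q, ¬ Pendant (DA A) q → ∃ p, Adjd (DA A) q p ∧ Pendant (DA A) p) :
    Delta A = ∏ q ∈ innerSet (DA A), ∑ p ∈ pendantNbrs (DA A) q, A q p * A p q := by
  rw [Finset.prod_sum, Delta]
  symm
  refine Finset.sum_nbij (starMatching (DA A)) (fun x hx => ?_) injOn_starMatching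
    (fun M hM => ?_) (fun x hx => ?_)
  · simpa [maxMatchings] using isMaxMatching_starMatching hx hPP
  · rw [maxMatchings, Finset.mem_coe, Set.Finite.mem_toFinset] at hM
    obtain ⟨x, hx, rfl⟩ := hM.exists_eq_starMatching hPP hD
    exact ⟨x, hx, rfl⟩
  · rw [matchProd, starMatching, Finset.prod_image (injOn_starEdge hx)]
    rfl

end Matching

section Existence

variable {n : ℕ} {A : Matrix (Fin n) (Fin n) ℝ}

theorem isNondegPendantSet_pendantSet (hD : InClassD (DA A)) (hSC : StronglyConnected (DA A))
    {q : Fin n} (hq : ¬ Pendant (DA A) q) (hΔ : Delta A ≠ 0) :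
    IsNondegPendantSet A (pendantSet (DA A)) := by
  classical
  have hPP : ∀ p p', Pendant (DA A) p → Pendant (DA A) p' → ¬ Adjd (DA A) p p' :=
    fun _ _ => not_adjd_of_pendant hD.1 hSC hq
  refine ⟨fun p hp => mem_pendantSet.1 hp, fun p hp p' hp' => ?_, fun i hi => ?_⟩
  · by_contra h
    exact hPP p p' (mem_pendantSet.1 hp) (mem_pendantSet.1 hp') (hD.1.adjd h)
  · have hi' : i ∈ innerSet (DA A) := mem_innerSet.2 fun h => hi (mem_pendantSet.2 h)
    rw [delta_eq_prod hPP hD.2, Finset.prod_ne_zero_iff] at hΔ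
    rw [pendantWeight, ← Finset.sum_filter_of_ne fun k hk hne =>
      hD.1.adjd (left_ne_zero_of_mul hne)]
    exact hΔ i hi'

theorem exists_isNondegPendantSet_of_forall_pendant (hA : IsSSD (DA A))
    (hSC : StronglyConnected (DA A)) (hP : ∀ i, Pendant (DA A) i) :
    ∃ S, IsNondegPendantSet A S := by
  rcases isEmpty_or_nonempty (Fin n) with hn | ⟨⟨v⟩⟩
  · exact ⟨∅, by simp, by simp, fun i => isEmptyElim i⟩
  obtain ⟨u, hvu, -⟩ := hP v
  refine ⟨{v}, by simpa using hP v, by simpa using not_not.1 (hA.1 v), fun i hi => ?_⟩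
  obtain rfl : i = u := (eq_or_eq_of_reflTransGen_pendant_pair hA (hP v) (hP u) hvu
    (hSC v i)).resolve_left (by simpa using hi)
  simpa [pendantWeight] using mul_ne_zero hvu.2.2 hvu.2.1

end Existence

/-- Corollary 3.4: for `D(A) ∈ 𝒟` strongly connected with `Δ_A ≠ 0`, the digraph `D(A^#)`
is a strongly connected simple symmetric digraph; in particular `A^#` has zero diagonal and
is combinatorially symmetric. -/
theorem group_inverse_digraph_ssd {n : ℕ} (A : Matrix (Fin n) (Fin n) ℝ)
    (hD : InClassD (DA A)) (hSC : StronglyConnected (DA A)) (hΔ : Delta A ≠ 0) :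
    ∀ X, IsGroupInverse A X →
      StronglyConnected (DA X) ∧ IsSSD (DA X) ∧ (∀ i, X i i = 0) ∧
        ∀ i j, X i j ≠ 0 ↔ X j i ≠ 0 := by
  obtain ⟨S, hS⟩ : ∃ S, IsNondegPendantSet A S := by
    by_cases hq : ∃ q, ¬ Pendant (DA A) q
    · obtain ⟨q, hq⟩ := hq
      exact ⟨_, isNondegPendantSet_pendantSet hD hSC hq hΔ⟩
    · exact exists_isNondegPendantSet_of_forall_pendant hD.1 hSC (not_exists_not.1 hq)
  exact hS.groupInverse_digraph hD.1 hSC
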